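/- arXiv:math/0004047 — 3 statements merged into one kernel-verified Lean document; each statement's English description precedes it below -/
import Mathlib

section
/- Let L be a bounded lattice, n₁ ∈ ℕ, and κ an infinite cardinal. If L^{n₁} contains an antichain of cardinality κ and L is n₁-o.p.c., then there is a family of 2^κ many pairwise incomparable n₁-ary polynomial functions on L (in the pointwise order); consequently there exists n₂ ∈ ℕ such that L^{n₂} contains an antichain of cardinality 2^κ. -/
/-!
For `S ⊆ A`, the `{⊥, ⊤}`-valued indicator of the up-set of `S` is monotone, and since `A` is
an antichain these indicators compare exactly as the sets `S` do. A set of infinite size `κ`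
has `2^κ` pairwise ⊆-incomparable subsets, so `n₁`-o.p.c. yields `2^κ` pairwise incomparable
polynomial functions.

Every polynomial function is `t.eval c` for one of countably many lattice terms `t` and a tuple
`c` of constants, and it is monotone in `c`. Since `cof (2^κ) > κ ≥ ℵ₀`, one term `t` serves
`2^κ` of the functions, and their constant tuples form an antichain in `L^(numConsts t)`.
-/

universe u

/-- `IsPolyFn L n p` says that `p : (Fin n → L) → L` is an `n`-ary lattice polynomial
function on `L`. -/
inductive IsPolyFn (L : Type u) [Lattice L] (n : ℕ) : ((Fin n → L) → L) → Prop
  | proj (i : Fin n) : IsPolyFn L n fun x => x i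
  | const (c : L) : IsPolyFn L n fun _ => c
  | sup {p q : (Fin n → L) → L} : IsPolyFn L n p → IsPolyFn L n q →
      IsPolyFn L n fun x => p x ⊔ q x
  | inf {p q : (Fin n → L) → L} : IsPolyFn L n p → IsPolyFn L n q →
      IsPolyFn L n fun x => p x ⊓ q x

open Cardinal Set

/-- Lattice terms in the variables `Fin n` with anonymous constant slots, filled in by `eval`. -/
inductive LatticeTerm (n : ℕ) : Type u
  | var : Fin n → LatticeTerm n
  | const : LatticeTerm n
  | sup : LatticeTerm n → LatticeTerm n → LatticeTerm n
  | inf : LatticeTerm n → LatticeTerm n → LatticeTerm n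

namespace LatticeTerm

variable {n : ℕ}

def toNat : LatticeTerm n → ℕ
  | var i => Nat.pair 0 i
  | const => Nat.pair 1 0
  | sup a b => Nat.pair 2 (Nat.pair a.toNat b.toNat)
  | inf a b => Nat.pair 3 (Nat.pair a.toNat b.toNat)

theorem toNat_injective : Function.Injective (toNat (n := n)) := by
  intro a b h
  induction a generalizing b with
  | var | const => cases b <;> simp_all [toNat, Nat.pair_eq_pair, Fin.val_inj]
  | sup _ _ ih₁ ih₂ | inf _ _ ih₁ ih₂ =>
    cases b <;> simp only [toNat, Nat.pair_eq_pair] at h <;> grind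

instance : Countable (LatticeTerm n) := toNat_injective.countable

def numConsts : LatticeTerm n → ℕ
  | var _ => 0
  | const => 1
  | sup a b => a.numConsts + b.numConsts
  | inf a b => a.numConsts + b.numConsts

variable {L : Type u} [Lattice L]

def eval : (t : LatticeTerm n) → (Fin t.numConsts → L) → (Fin n → L) → L
  | var i, _, x => x i
  | const, c, _ => c ⟨0, Nat.one_pos⟩
  | sup a b, c, x =>
    a.eval (fun j => c (Fin.castAdd _ j)) x ⊔ b.eval (fun j => c (Fin.natAdd _ j)) x
  | inf a b, c, x =>
    a.eval (fun j => c (Fin.castAdd _ j)) x ⊓ b.eval (fun j => c (Fin.natAdd _ j)) x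

theorem monotone_eval (t : LatticeTerm n) : Monotone (t.eval (L := L)) := by
  induction t with
  | var i => exact fun _ _ _ _ => le_rfl
  | const => exact fun _ _ h _ => h _
  | sup a b iha ihb =>
    exact fun _ _ h x => sup_le_sup (iha (fun j => h _) x) (ihb (fun j => h _) x)
  | inf a b iha ihb =>
    exact fun _ _ h x => inf_le_inf (iha (fun j => h _) x) (ihb (fun j => h _) x)

theorem exists_eval_eq {p : (Fin n → L) → L} (hp : IsPolyFn L n p) :
    ∃ (t : LatticeTerm n) (c : Fin t.numConsts → L), t.eval c = p := by
  induction hp with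
  | proj i => exact ⟨var i, Fin.elim0, rfl⟩
  | const c => exact ⟨const, fun _ => c, rfl⟩
  | sup _ _ ihp ihq =>
    obtain ⟨s, c, rfl⟩ := ihp
    obtain ⟨t, d, rfl⟩ := ihq
    exact ⟨sup s t, Fin.append c d, by simp [eval]⟩
  | inf _ _ ihp ihq =>
    obtain ⟨s, c, rfl⟩ := ihp
    obtain ⟨t, d, rfl⟩ := ihq
    exact ⟨inf s t, Fin.append c d, by simp [eval]⟩

end LatticeTerm

theorem IsAntichain.exists_antichain_mk_eq_of_subset_range {α β : Type u} [Preorder α]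
    [Preorder β] {f : α → β} (hf : Monotone f) {F : Set β} (hF : IsAntichain (· ≤ ·) F)
    (hFf : F ⊆ range f) : ∃ X : Set α, IsAntichain (· ≤ ·) X ∧ #X = #F := by
  choose g hg using fun y : F => hFf y.2
  have hg_inj : Function.Injective g := fun y z h => Subtype.ext (by rw [← hg y, ← hg z, h])
  refine ⟨range g, ?_, mk_range_eq g hg_inj⟩
  rintro _ ⟨y, rfl⟩ _ ⟨z, rfl⟩ hne hle
  have hyz : (y : β) ≤ z := by simpa only [hg] using hf hle
  exact hne (congrArg g (Subtype.ext (hF.eq y.2 z.2 hyz)))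

theorem Cardinal.exists_mk_preimage_sigmaMk_eq {S : Type u} [Countable S] {V : S → Type u}
    (X : Set (Σ s, V s)) (hX : ℵ₀ < (#X).ord.cof) : ∃ s, #(Sigma.mk s ⁻¹' X) = #X := by
  obtain ⟨s, t, htX, hXt, hts⟩ := infinite_pigeonhole_set (fun x : X => x.1.1) #X le_rfl
    (hX.le.trans (Ordinal.cof_ord_le _)) (mk_le_aleph0.trans_lt hX)
  refine ⟨s, (mk_preimage_of_injective _ _ sigma_mk_injective).antisymm ?_⟩
  calc #X ≤ #t := hXt
    _ ≤ #(X ∩ range (Sigma.mk s) : Set (Σ s, V s)) :=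
      mk_le_mk_of_subset fun x hx => ⟨htX hx, range_sigmaMk s ▸ hts hx⟩
    _ = #(Sigma.mk s ⁻¹' X) := by
      rw [← image_preimage_eq_inter_range, mk_image_eq sigma_mk_injective]

theorem exists_antichain_of_antichain_polyFn {L : Type u} [Lattice L] {n : ℕ}
    {F : Set ((Fin n → L) → L)} (hF : IsAntichain (· ≤ ·) F)
    (hpoly : ∀ p ∈ F, IsPolyFn L n p)
    (hcof : ℵ₀ < (#F).ord.cof) :
    ∃ (m : ℕ) (B : Set (Fin m → L)), IsAntichain (· ≤ ·) B ∧ #B = #F := by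
  let evalSigma : (Σ t : LatticeTerm.{u} n, Fin t.numConsts → L) → (Fin n → L) → L :=
    fun tc => tc.1.eval tc.2
  have heval : Monotone evalSigma := by
    rintro _ _ ⟨t, c, d, hcd⟩
    exact t.monotone_eval hcd
  have hrange : F ⊆ range evalSigma := fun p hp => by
    obtain ⟨t, c, rfl⟩ := LatticeTerm.exists_eval_eq (hpoly p hp)
    exact ⟨⟨t, c⟩, rfl⟩
  obtain ⟨X, hX, hXF⟩ := hF.exists_antichain_mk_eq_of_subset_range heval hrange
  obtain ⟨t, ht⟩ := exists_mk_preimage_sigmaMk_eq X (hXF ▸ hcof)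
  have hB : IsAntichain (· ≤ ·) (Sigma.mk t ⁻¹' X) :=
    hX.preimage sigma_mk_injective fun _ _ h => Sigma.mk_le_mk_iff.2 h
  exact ⟨t.numConsts, _, hB, ht.trans hXF⟩

open Classical in
noncomputable def upIndicator {α L : Type*} [LE α] [Top L] [Bot L] (S : Set α) (x : α) : L :=
  if ∃ a ∈ S, a ≤ x then ⊤ else ⊥

section upIndicator

variable {α L : Type*} [Preorder α] [PartialOrder L] [BoundedOrder L]

theorem monotone_upIndicator (S : Set α) : Monotone (upIndicator S : α → L) := by
  intro x y hxy
  by_cases hx : ∃ a ∈ S, a ≤ x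
  · have hy : ∃ a ∈ S, a ≤ y := hx.imp fun a ha => ⟨ha.1, ha.2.trans hxy⟩
    rw [show upIndicator S y = (⊤ : L) from if_pos hy]
    exact le_top
  · rw [show upIndicator S x = (⊥ : L) from if_neg hx]
    exact bot_le

theorem subset_of_upIndicator_le [Nontrivial L] {A S T : Set α} (hA : IsAntichain (· ≤ ·) A)
    (hS : S ⊆ A) (hT : T ⊆ A) (h : (upIndicator S : α → L) ≤ upIndicator T) : S ⊆ T := by
  intro a ha
  have hle := h a
  rw [upIndicator, if_pos ⟨a, ha, le_rfl⟩, upIndicator] at hle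
  by_cases hex : ∃ b ∈ T, b ≤ a
  · obtain ⟨b, hb, hba⟩ := hex
    rwa [← hA.eq (hT hb) (hS ha) hba]
  · rw [if_neg hex, top_le_iff] at hle
    exact absurd hle bot_ne_top

end upIndicator

theorem Infinite.exists_family_eq_of_subset (A : Type*) [Infinite A] :
    ∃ G : (A → Bool) → Set A, ∀ g h, G g ⊆ G h → g = h := by
  obtain ⟨e⟩ : Nonempty (A × Bool ≃ A) := Cardinal.eq.1 (by
    simpa using Cardinal.mul_eq_left (infinite_iff.1 ‹_›)
      (natCast_lt_aleph0.le.trans (infinite_iff.1 ‹_›)) two_ne_zero)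
  -- the graph of `g`, transported along `A × Bool ≃ A`
  refine ⟨fun g => range fun a => e (a, g a), fun g h hgh => funext fun a => ?_⟩
  obtain ⟨b, hb⟩ := hgh ⟨a, rfl⟩
  obtain ⟨rfl, hab⟩ := Prod.ext_iff.1 (e.injective hb)
  exact hab.symm

theorem IsAntichain.exists_antichain_monotone {α L : Type u} [Preorder α] [PartialOrder L]
    [BoundedOrder L] [Nontrivial L] {A : Set α} (hA : IsAntichain (· ≤ ·) A)
    (hinf : A.Infinite) :
    ∃ F : Set (α → L), IsAntichain (· ≤ ·) F ∧ (∀ f ∈ F, Monotone f) ∧ #F = 2 ^ #A := by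
  have := hinf.to_subtype
  obtain ⟨G, hG⟩ := Infinite.exists_family_eq_of_subset A
  let P : (A → Bool) → α → L := fun g => upIndicator (Subtype.val '' G g)
  have hP : ∀ g h, P g ≤ P h → g = h := fun g h hle =>
    hG g h <| (image_subset_image_iff Subtype.val_injective).1 <|
      subset_of_upIndicator_le hA (Subtype.coe_image_subset _ _) (Subtype.coe_image_subset _ _) hle
  refine ⟨range P, ?_, forall_mem_range.2 fun g => monotone_upIndicator _, ?_⟩
  · rintro _ ⟨g, rfl⟩ _ ⟨h, rfl⟩ hne hle
    exact hne (congrArg P (hP g h hle))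
  · rw [mk_range_eq P fun g h he => hP g h he.le]
    simp

/-- If `L^{n₁}` has an antichain of infinite cardinality `κ` and `L` is `n₁`-o.p.c., then
there are `2^κ` many pairwise incomparable `n₁`-ary polynomial functions on `L`;
consequently some `L^{n₂}` has an antichain of cardinality `2^κ`. -/
theorem antichain_and_opc_give_bigger_antichain (L : Type u) [Lattice L] [BoundedOrder L]
    (n₁ : ℕ) (κ : Cardinal.{u}) (hκ : Cardinal.aleph0 ≤ κ)
    (A : Set (Fin n₁ → L)) (hA : IsAntichain (· ≤ ·) A) (hcard : Cardinal.mk A = κ)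
    (hopc : ∀ f : (Fin n₁ → L) → L, Monotone f → IsPolyFn L n₁ f) :
    (∃ (ι : Type u) (P : ι → (Fin n₁ → L) → L), Cardinal.mk ι = 2 ^ κ ∧
        (∀ i, IsPolyFn L n₁ (P i)) ∧
        ∀ i j : ι, i ≠ j → ¬P i ≤ P j ∧ ¬P j ≤ P i) ∧
    ∃ (n₂ : ℕ) (B : Set (Fin n₂ → L)),
      IsAntichain (· ≤ ·) B ∧ Cardinal.mk B = 2 ^ κ := by
  have hinf : A.Infinite := infinite_coe_iff.1 (infinite_iff.2 (hcard ▸ hκ))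
  have : Nontrivial L := by
    by_contra hL
    rw [not_nontrivial_iff_subsingleton] at hL
    exact hinf subsingleton_of_subsingleton.finite
  obtain ⟨F, hF, hmono, hFcard⟩ := hA.exists_antichain_monotone (L := L) hinf
  rw [hcard] at hFcard
  have hpoly : ∀ p ∈ F, IsPolyFn L n₁ p := fun p hp => hopc p (hmono p hp)
  have hincomp : ∀ p q : F, p ≠ q → ¬(p : (Fin n₁ → L) → L) ≤ q := fun p q hpq =>
    hF p.2 q.2 (Subtype.val_injective.ne hpq)
  refine ⟨⟨F, Subtype.val, hFcard, fun p => hpoly p p.2, fun p q hpq =>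
    ⟨hincomp p q hpq, hincomp q p hpq.symm⟩⟩,
    hFcard ▸ exists_antichain_of_antichain_polyFn hF hpoly ?_⟩
  rw [hFcard]
  exact hκ.trans_lt (lt_cof_ord_power hκ one_lt_two)
end

section
/- There exists a complete bounded lattice L of cardinality ℵ_ω such that for every n ∈ ℕ, L contains an antichain of cardinality ℵ_n, yet every antichain in L has cardinality strictly less than ℵ_ω, every chain in L is at most countable, and there are 2^{ℵ_ω} many monotone functions from L to L. -/
/-! Stack, for `n = 0, 1, 2, …`, a point `node n` under an antichain of size `ℵ_n`, and put a
top element over everything; that is, order the elements by their height `rank`. A set has a least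
element unless its lowest elements are two points of one antichain layer, and then the node
just below that layer is its meet, so the tower is a complete lattice. Antichains live in a single
layer and chains meet every height at most once, while choosing a self-map of every layer
independently gives `2 ^ ℵ_ω` monotone maps. -/

open Cardinal Set

universe u

inductive Tower (A : ℕ → Type u) : Type u
  | node : ℕ → Tower A
  | pt : (n : ℕ) → A n → Tower A
  | top : Tower A

namespace Tower

variable {A : ℕ → Type u}

def rank : Tower A → ℕ∞
  | node n => (2 * n : ℕ)
  | pt n _ => (2 * n + 1 : ℕ)
  | top => ⊤

instance : PartialOrder (Tower A) where
  le a b := a = b ∨ rank a < rank b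
  le_refl _ := Or.inl rfl
  le_trans a b c := by
    rintro (rfl | hab) (rfl | hbc)
    exacts [Or.inl rfl, Or.inr hbc, Or.inr hab, Or.inr (hab.trans hbc)]
  le_antisymm a b := by
    rintro (rfl | hab) (hba | hba)
    exacts [rfl, rfl, hba.symm, absurd (hab.trans hba) (lt_irrefl _)]

theorem le_iff {a b : Tower A} : a ≤ b ↔ a = b ∨ rank a < rank b := Iff.rfl

theorem pt_injective (n : ℕ) : Function.Injective (pt (A := A) n) := fun _ _ h => by
  injection h

theorem rank_pt (n : ℕ) (x : A n) : rank (pt n x) = rank (node (A := A) n) + 1 := by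
  simp [rank]

theorem eq_node_of_rank_eq {a : Tower A} {n : ℕ} (h : rank a = rank (node (A := A) n)) :
    a = node n := by
  cases a with
  | node m => simp only [rank, Nat.cast_inj] at h; rw [show m = n by omega]
  | pt m _ => simp only [rank, Nat.cast_inj] at h; omega
  | top => exact absurd h (ENat.top_ne_natCast _)

theorem mem_range_pt_of_rank_eq {a : Tower A} {n : ℕ} {x : A n} (h : rank a = rank (pt n x)) :
    a ∈ range (pt n) := by
  cases a with
  | node m => simp only [rank, Nat.cast_inj] at h; omega
  | pt m y =>
    simp only [rank, Nat.cast_inj] at h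
    obtain rfl : m = n := by omega
    exact mem_range_self y
  | top => exact absurd h (ENat.top_ne_natCast _)

theorem eq_top_of_rank_eq {a : Tower A} (h : rank a = ⊤) : a = top := by
  cases a with
  | top => rfl
  | _ => exact absurd h (ENat.natCast_ne_top _)

theorem rank_fiber_subsingleton_or (r : ℕ∞) :
    (rank ⁻¹' {r} : Set (Tower A)).Subsingleton ∨
      ∃ n, rank ⁻¹' {r} ⊆ range (pt (A := A) n) := by
  rcases (rank ⁻¹' {r} : Set (Tower A)).eq_empty_or_nonempty with h | ⟨a, rfl⟩
  · exact Or.inl (h ▸ subsingleton_empty)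
  cases a with
  | node n =>
    exact Or.inl fun b hb c hc => (eq_node_of_rank_eq hb).trans (eq_node_of_rank_eq hc).symm
  | pt n x => exact Or.inr ⟨n, fun b hb => mem_range_pt_of_rank_eq hb⟩
  | top =>
    exact Or.inl fun b hb c hc => (eq_top_of_rank_eq hb).trans (eq_top_of_rank_eq hc).symm

theorem exists_pt_of_rank_eq {a b : Tower A} (hab : a ≠ b) (h : rank a = rank b) :
    ∃ n, a ∈ range (pt n) ∧ b ∈ range (pt n) := by
  rcases rank_fiber_subsingleton_or (rank b) with hs | ⟨n, hs⟩
  · exact absurd (hs h rfl) hab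
  · exact ⟨n, hs h, hs rfl⟩

instance : OrderTop (Tower A) where
  top := top
  le_top a := by
    by_cases h : a = top
    · exact Or.inl h
    · exact Or.inr (lt_top_iff_ne_top.2 fun ha => h (eq_top_of_rank_eq ha))

theorem le_node_iff {a : Tower A} {n : ℕ} :
    a ≤ node n ↔ rank a ≤ rank (node (A := A) n) := by
  rw [le_iff, le_iff_lt_or_eq]
  exact ⟨fun h => h.elim (fun h => Or.inr (congrArg rank h)) Or.inl,
    fun h => h.elim Or.inr fun h => Or.inl (eq_node_of_rank_eq h)⟩

theorem rank_lt_rank_pt_iff {a : Tower A} {n : ℕ} {x : A n} :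
    rank a < rank (pt n x) ↔ rank a ≤ rank (node (A := A) n) := by
  rw [rank_pt]
  exact ENat.lt_add_one_iff (n := rank (node n)) (ENat.natCast_ne_top _)

theorem isGLB_node {s : Set (Tower A)} {n : ℕ} {x y : A n} (hxy : x ≠ y) (hx : pt n x ∈ s)
    (hy : pt n y ∈ s) (hs : ∀ c ∈ s, rank (pt n x) ≤ rank c) : IsGLB s (node n) := by
  refine ⟨fun c hc => Or.inr ((rank_lt_rank_pt_iff.2 le_rfl).trans_le (hs c hc)),
    fun c hc => ?_⟩
  refine le_node_iff.2 (rank_lt_rank_pt_iff (x := x) |>.1 ?_)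
  rcases hc hx with rfl | h
  · rcases hc hy with h | h
    · exact absurd (pt_injective n h) hxy
    · exact absurd h (lt_irrefl _)
  · exact h

theorem exists_isGLB (s : Set (Tower A)) : ∃ a, IsGLB s a := by
  rcases s.eq_empty_or_nonempty with rfl | hs
  · exact ⟨⊤, isGLB_empty⟩
  obtain ⟨a, ha, hmin⟩ := (InvImage.wf rank wellFounded_lt).has_min s hs
  by_cases hleast : ∀ b ∈ s, a ≤ b
  · exact ⟨a, IsLeast.isGLB ⟨ha, hleast⟩⟩
  push Not at hleast
  obtain ⟨b, hb, hab⟩ := hleast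
  have hrank : rank a = rank b :=
    le_antisymm (not_lt.1 (hmin b hb)) (not_lt.1 fun h => hab (Or.inr h))
  obtain ⟨n, ⟨x, rfl⟩, ⟨y, rfl⟩⟩ := exists_pt_of_rank_eq (fun h => hab h.le) hrank
  exact ⟨node n,
    isGLB_node (by rintro rfl; exact hab le_rfl) ha hb fun c hc => not_lt.1 (hmin c hc)⟩

noncomputable instance : InfSet (Tower A) := ⟨fun s => (exists_isGLB s).choose⟩

noncomputable instance : CompleteLattice (Tower A) :=
  completeLatticeOfInf _ fun s => (exists_isGLB s).choose_spec

theorem countable_of_isChain {C : Set (Tower A)} (hC : IsChain (· ≤ ·) C) : C.Countable := by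
  refine (mapsTo_univ rank C).countable_of_injOn (fun a ha b hb h => ?_) (to_countable _)
  by_contra hab
  rcases hC ha hb hab with (h' | h') | (h' | h')
  exacts [hab h', h.not_lt h', hab h'.symm, h.not_gt h']

theorem subsingleton_or_subset_range_pt_of_isAntichain {S : Set (Tower A)}
    (hS : IsAntichain (· ≤ ·) S) : S.Subsingleton ∨ ∃ n, S ⊆ range (pt n) := by
  rcases S.eq_empty_or_nonempty with rfl | ⟨a, ha⟩
  · exact Or.inl subsingleton_empty
  have hfiber : S ⊆ rank ⁻¹' {rank a} := fun b hb => by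
    by_contra hne
    rcases lt_or_gt_of_ne hne with h | h
    · exact hS hb ha (by rintro rfl; exact hne rfl) (Or.inr h)
    · exact hS ha hb (by rintro rfl; exact hne rfl) (Or.inr h)
  exact (rank_fiber_subsingleton_or (rank a)).imp (·.anti hfiber)
    fun ⟨n, h⟩ => ⟨n, hfiber.trans h⟩

theorem isAntichain_range_pt (n : ℕ) : IsAntichain (· ≤ ·) (range (pt (A := A) n)) := by
  rintro _ ⟨x, rfl⟩ _ ⟨y, rfl⟩ hne (h | h)
  exacts [hne h, h.ne rfl]

def map {B : ℕ → Type*} (g : ∀ n, A n → B n) : Tower A → Tower B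
  | node n => node n
  | pt n x => pt n (g n x)
  | top => top

theorem rank_map {B : ℕ → Type*} (g : ∀ n, A n → B n) (a : Tower A) :
    rank (map g a) = rank a := by
  cases a <;> rfl

theorem monotone_map {B : ℕ → Type*} (g : ∀ n, A n → B n) : Monotone (map g) := by
  rintro a b (rfl | h)
  exacts [le_rfl, Or.inr (by rwa [rank_map, rank_map])]

theorem map_injective {B : ℕ → Type*} :
    Function.Injective (map : (∀ n, A n → B n) → Tower A → Tower B) := fun _ _ h =>
  funext fun n => funext fun x => pt_injective n (congrFun h (pt n x))

theorem mk_pi_le_mk_monotone : #(∀ n, A n → A n) ≤ #{f : Tower A → Tower A // Monotone f} :=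
  mk_le_of_injective (f := fun g => ⟨map g, monotone_map g⟩) fun _ _ h =>
    map_injective (congrArg Subtype.val h)

def equivOption : Tower A ≃ Option (ULift.{u} ℕ ⊕ Σ n, A n) where
  toFun
    | node n => some (.inl ⟨n⟩)
    | pt n x => some (.inr ⟨n, x⟩)
    | top => none
  invFun
    | some (.inl n) => node n.down
    | some (.inr ⟨n, x⟩) => pt n x
    | none => top
  left_inv a := by cases a <;> rfl
  right_inv o := by rcases o with _ | _ | ⟨_, _⟩ <;> rfl

theorem mk_tower : #(Tower A) = ℵ₀ + sum (fun n => #(A n)) + 1 := by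
  rw [mk_congr equivOption, mk_option, mk_sum, mk_sigma, mk_uLift, mk_eq_aleph0, lift_aleph0,
    lift_id, lift_id]

end Tower

open Ordinal in
theorem iSup_aleph_natCast : ⨆ n : ℕ, (ℵ_ n : Cardinal.{0}) = ℵ_ ω := by
  rw [← iSup_natCast, isNormal_aleph.map_iSup bddAbove_of_small]

open Ordinal in
theorem sum_aleph_natCast : sum (fun n : ℕ => (ℵ_ n : Cardinal.{0})) = ℵ_ ω := by
  rw [sum_eq_iSup_of_mk_le_iSup, iSup_aleph_natCast]
  · exact (mk_eq_aleph0 ℕ).ge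
  · rw [mk_eq_aleph0, iSup_aleph_natCast]
    exact aleph0_le_aleph _

section AlephFamily

open Ordinal

variable {A : ℕ → Type}

theorem mk_tower_eq_aleph_omega0 (hA : ∀ n, #(A n) = ℵ_ n) : #(Tower A) = ℵ_ ω := by
  simp only [Tower.mk_tower, hA, sum_aleph_natCast]
  rw [add_eq_right (aleph0_le_aleph _) (aleph0_le_aleph _), add_one_eq (aleph0_le_aleph _)]

theorem mk_pi_endo_eq_two_power (hA : ∀ n, #(A n) = ℵ_ n) :
    #(∀ n, A n → A n) = 2 ^ ℵ_ ω := by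
  have hfactor (n : ℕ) : #(A n → A n) = 2 ^ ℵ_ n := by
    rw [← power_def, hA, power_self_eq (aleph0_le_aleph _)]
  rw [mk_pi]
  simp only [hfactor]
  rw [← power_sum, sum_aleph_natCast]

theorem mk_lt_aleph_omega0_of_isAntichain (hA : ∀ n, #(A n) = ℵ_ n) {S : Set (Tower A)}
    (hS : IsAntichain (· ≤ ·) S) : #S < ℵ_ ω := by
  rcases Tower.subsingleton_or_subset_range_pt_of_isAntichain hS with hS | ⟨n, hS⟩
  · exact hS.cardinalMk_le_one.trans_lt (one_lt_aleph0.trans_le (aleph0_le_aleph _))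
  · calc #S ≤ #(range (Tower.pt n)) := mk_le_mk_of_subset hS
      _ = ℵ_ n := by rw [mk_range_eq _ (Tower.pt_injective n), hA]
      _ < ℵ_ ω := aleph_lt_aleph.2 (natCast_lt_omega0 n)

theorem mk_monotone_tower_eq (hA : ∀ n, #(A n) = ℵ_ n) :
    #{f : Tower A → Tower A // Monotone f} = 2 ^ ℵ_ ω := by
  refine le_antisymm ?_ (mk_pi_endo_eq_two_power hA ▸ Tower.mk_pi_le_mk_monotone)
  calc #{f : Tower A → Tower A // Monotone f} ≤ #(Tower A → Tower A) := mk_subtype_le _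
    _ = 2 ^ ℵ_ ω := by
      rw [← power_def, mk_tower_eq_aleph_omega0 hA, power_self_eq (aleph0_le_aleph _)]

end AlephFamily

/-- There is a complete (bounded) lattice `L` of cardinality `ℵ_ω` which contains antichains
of cardinality `ℵ_n` for each `n`, but all of whose antichains have cardinality `< ℵ_ω` and
all of whose chains are at most countable, and which admits `2^{ℵ_ω}` many monotone
functions `L → L`. -/
theorem exists_lattice_aleph_omega_antichains :
    ∃ (L : Type) (_ : CompleteLattice L),
      Cardinal.mk L = Cardinal.aleph Ordinal.omega0 ∧
      (∀ n : ℕ, ∃ A : Set L, IsAntichain (· ≤ ·) A ∧ Cardinal.mk A = Cardinal.aleph n) ∧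
      (∀ A : Set L, IsAntichain (· ≤ ·) A → Cardinal.mk A < Cardinal.aleph Ordinal.omega0) ∧
      (∀ C : Set L, IsChain (· ≤ ·) C → C.Countable) ∧
      Cardinal.mk {f : L → L // Monotone f} = 2 ^ Cardinal.aleph Ordinal.omega0 := by
  have hA (n : ℕ) : #(ℵ_ n : Cardinal.{0}).out = ℵ_ n := mk_out _
  refine ⟨Tower fun n => (ℵ_ n).out, inferInstance, mk_tower_eq_aleph_omega0 hA, fun n => ?_,
    fun _ => mk_lt_aleph_omega0_of_isAntichain hA, fun _ => Tower.countable_of_isChain,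
    mk_monotone_tower_eq hA⟩
  exact ⟨range (Tower.pt n), Tower.isAntichain_range_pt n,
    by rw [mk_range_eq _ (Tower.pt_injective n), hA]⟩
end

section
/- For every infinite set A, the bounded lattice M_A whose underlying set is A together with two new elements ⊥ and ⊤, ordered so that the elements of A are pairwise incomparable and ⊥ < a < ⊤ for all a ∈ A, is simple and satisfies Wille's property and has the interpolation property, but is not o.p.c. -/
/-!
Any congruence of `M_A` identifying two distinct elements identifies some comparable pair, and
joining and meeting with fresh atoms spreads this to `⊥ ≡ ⊤`, so `M_A` is simple. A regressive
join-endomorphism `f` sends each atom to itself or to `⊥`; if some atom goes to `⊥`, then `f ⊤`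
lies below two distinct atoms, hence `f = ⊥`, and otherwise `f = id`.

Since `A` is infinite, every pair `α ≰ β` is separated by a unary polynomial sending `α` to `⊤`
and `β` to `⊥`, and then a monotone `f` agrees on a finite set `S` with the polynomial
`⨆_{a ∈ S} (f a ⊓ ⨅_{b ∈ S} q_{a,b})` built from separators `q_{a,b}`. On the other hand a
polynomial involves only finitely many constants, so it commutes with every permutation of the
atoms fixing them; the monotone map that keeps the atoms of an infinite, coinfinite `B ⊆ A` and
sends the other atoms to `⊥` does not.
-/

universe u

/-- `r` is a lattice congruence: an equivalence relation compatible with `⊔` and `⊓`. -/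
def IsLatticeCongruence (L : Type u) [Lattice L] (r : L → L → Prop) : Prop :=
  Equivalence r ∧
    ∀ a b c d : L, r a b → r c d → r (a ⊔ c) (b ⊔ d) ∧ r (a ⊓ c) (b ⊓ d)

/-- A lattice is simple if its only congruences are equality and the all-relation. -/
def IsSimpleLattice (L : Type u) [Lattice L] : Prop :=
  ∀ r : L → L → Prop, IsLatticeCongruence L r →
    (∀ x y : L, r x y ↔ x = y) ∨ (∀ x y : L, r x y)

/-- Wille's property: the only regressive join-homomorphisms `L → L` are the identity
and the constant map with value `⊥`. -/
def WilleProperty (L : Type u) [Lattice L] [BoundedOrder L] : Prop :=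
  ∀ f : L → L, (∀ x, f x ≤ x) → (∀ x y, f (x ⊔ y) = f x ⊔ f y) →
    f = id ∨ f = fun _ => (⊥ : L)

/-- The lattice `M_A`: the elements of `A` form an antichain, with a bottom and a top
element added. -/
inductive MA (A : Type u) : Type u
  | bot : MA A
  | mid : A → MA A
  | top : MA A

namespace MA

variable {A : Type u}

/-- The order on `M_A`: `⊥ ≤ x ≤ ⊤`, and distinct elements of `A` are incomparable. -/
protected def le : MA A → MA A → Prop
  | bot, _ => True
  | _, top => True
  | mid a, mid b => a = b
  | top, _ => False
  | mid _, bot => False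

instance : PartialOrder (MA A) where
  le := MA.le
  le_refl x := by cases x <;> trivial
  le_trans x y z h₁ h₂ := by
    cases x <;> cases y <;> cases z <;> simp_all [MA.le]
  le_antisymm x y h₁ h₂ := by
    cases x <;> cases y <;> simp_all [MA.le]

open Classical in
noncomputable instance : Lattice (MA A) where
  sup x y := if MA.le x y then y else if MA.le y x then x else top
  le_sup_left x y := by
    cases x <;> cases y <;> simp_all [MA.le, LE.le] <;> split_ifs <;> simp_all [MA.le] <;>
      split_ifs <;> simp_all [MA.le]
  le_sup_right x y := by
    cases x <;> cases y <;> simp_all [MA.le, LE.le] <;> split_ifs <;> simp_all [MA.le] <;>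
      split_ifs <;> simp_all [MA.le]
  sup_le x y z h₁ h₂ := by
    cases x <;> cases y <;> cases z <;> simp_all [MA.le, LE.le] <;>
      split_ifs <;> simp_all [MA.le] <;> split_ifs <;> simp_all [MA.le]
  inf x y := if MA.le x y then x else if MA.le y x then y else bot
  inf_le_left x y := by
    cases x <;> cases y <;> simp_all [MA.le, LE.le] <;> split_ifs <;> simp_all [MA.le] <;>
      split_ifs <;> simp_all [MA.le]
  inf_le_right x y := by
    cases x <;> cases y <;> simp_all [MA.le, LE.le] <;> split_ifs <;> simp_all [MA.le] <;>
      split_ifs <;> simp_all [MA.le]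
  le_inf x y z h₁ h₂ := by
    cases x <;> cases y <;> cases z <;> simp_all [MA.le, LE.le] <;>
      split_ifs <;> simp_all [MA.le]

instance : BoundedOrder (MA A) where
  top := top
  bot := bot
  le_top x := by cases x <;> trivial
  bot_le x := by cases x <;> trivial

end MA

section Polynomials

variable {L : Type u} [Lattice L] {n : ℕ}

def IsUnaryPolyFn (L : Type u) [Lattice L] (g : L → L) : Prop :=
  ∀ (n : ℕ) (i : Fin n), IsPolyFn L n fun x => g (x i)

namespace IsUnaryPolyFn

theorem id : IsUnaryPolyFn L fun y => y := fun _ i => .proj i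

theorem const (c : L) : IsUnaryPolyFn L fun _ => c := fun _ _ => .const c

theorem sup {g h : L → L} (hg : IsUnaryPolyFn L g) (hh : IsUnaryPolyFn L h) :
    IsUnaryPolyFn L fun y => g y ⊔ h y := fun n i => (hg n i).sup (hh n i)

theorem inf {g h : L → L} (hg : IsUnaryPolyFn L g) (hh : IsUnaryPolyFn L h) :
    IsUnaryPolyFn L fun y => g y ⊓ h y := fun n i => (hg n i).inf (hh n i)

end IsUnaryPolyFn

namespace IsPolyFn

theorem finset_sup [OrderBot L] {ι : Type*} (s : Finset ι) {F : ι → (Fin n → L) → L}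
    (hF : ∀ i ∈ s, IsPolyFn L n (F i)) : IsPolyFn L n fun x => s.sup fun i => F i x := by
  classical
  induction s using Finset.cons_induction with
  | empty => exact .const ⊥
  | cons i s hi ih =>
    simp only [Finset.sup_cons]
    exact (hF i (s.mem_cons_self i)).sup (ih fun j hj => hF j (Finset.mem_cons_of_mem hj))

theorem finset_inf [OrderTop L] {ι : Type*} (s : Finset ι) {F : ι → (Fin n → L) → L}
    (hF : ∀ i ∈ s, IsPolyFn L n (F i)) : IsPolyFn L n fun x => s.inf fun i => F i x := by
  classical
  induction s using Finset.cons_induction with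
  | empty => exact .const ⊤
  | cons i s hi ih =>
    simp only [Finset.inf_cons]
    exact (hF i (s.mem_cons_self i)).inf (ih fun j hj => hF j (Finset.mem_cons_of_mem hj))

theorem exists_finite_forall_orderIso_comp {p : (Fin n → L) → L} (hp : IsPolyFn L n p) :
    ∃ C : Set L, C.Finite ∧
      ∀ φ : L ≃o L, (∀ c ∈ C, φ c = c) → ∀ x, p (φ ∘ x) = φ (p x) := by
  induction hp with
  | proj i => exact ⟨∅, Set.finite_empty, fun _ _ _ => rfl⟩
  | const c => exact ⟨{c}, Set.finite_singleton c, fun φ hφ _ => (hφ c rfl).symm⟩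
  | sup _ _ ihp ihq =>
    obtain ⟨C, hC, hp⟩ := ihp
    obtain ⟨D, hD, hq⟩ := ihq
    refine ⟨C ∪ D, hC.union hD, fun φ hφ x => ?_⟩
    dsimp only
    rw [φ.map_sup, hp φ (fun c hc => hφ c (.inl hc)), hq φ (fun c hc => hφ c (.inr hc))]
  | inf _ _ ihp ihq =>
    obtain ⟨C, hC, hp⟩ := ihp
    obtain ⟨D, hD, hq⟩ := ihq
    refine ⟨C ∪ D, hC.union hD, fun φ hφ x => ?_⟩
    dsimp only
    rw [φ.map_inf, hp φ (fun c hc => hφ c (.inl hc)), hq φ (fun c hc => hφ c (.inr hc))]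

theorem exists_eqOn_of_separating [BoundedOrder L]
    (hsep : ∀ α β : L, ¬α ≤ β → ∃ g, IsUnaryPolyFn L g ∧ g α = ⊤ ∧ g β = ⊥)
    {f : (Fin n → L) → L} (hf : Monotone f) {S : Set (Fin n → L)} (hS : S.Finite) :
    ∃ p, IsPolyFn L n p ∧ ∀ a ∈ S, p a = f a := by
  have hq : ∀ a b : Fin n → L, ∃ q, IsPolyFn L n q ∧ q a = ⊤ ∧ (¬a ≤ b → q b = ⊥) := by
    intro a b
    by_cases hab : a ≤ b
    · exact ⟨fun _ => ⊤, .const ⊤, rfl, absurd hab⟩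
    · obtain ⟨i, hi⟩ : ∃ i, ¬a i ≤ b i := by simpa [Pi.le_def] using hab
      obtain ⟨g, hg, hga, hgb⟩ := hsep _ _ hi
      exact ⟨fun x => g (x i), hg n i, hga, fun _ => hgb⟩
  choose q hq hqa hqb using hq
  obtain ⟨T, rfl⟩ := hS.exists_finset_coe
  refine ⟨fun x => T.sup fun a => f a ⊓ T.inf fun b => q a b x,
    finset_sup T fun a _ => (const _).inf (finset_inf T fun b _ => hq a b),
    fun b hb => le_antisymm (Finset.sup_le fun a _ => ?_) ?_⟩
  · by_cases hab : a ≤ b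
    · exact inf_le_left.trans (hf hab)
    · calc f a ⊓ T.inf (fun b' => q a b' b) ≤ q a b b := inf_le_right.trans (Finset.inf_le hb)
        _ = ⊥ := hqb a b hab
        _ ≤ f b := bot_le
  · calc f b = f b ⊓ T.inf fun b' => q b b' b := by simp [hqa]
      _ ≤ _ := Finset.le_sup (f := fun a => f a ⊓ T.inf fun b' => q a b' b) hb

end IsPolyFn

end Polynomials

theorem exists_pair_ne_ne {A : Type u} [Infinite A] (a : A) :
    ∃ b c : A, b ≠ c ∧ b ≠ a ∧ c ≠ a := by
  classical
  obtain ⟨b, hb⟩ := exists_ne a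
  obtain ⟨c, hc⟩ := Infinite.exists_notMem_finset {a, b}
  simp only [Finset.mem_insert, Finset.mem_singleton, not_or] at hc
  exact ⟨b, c, Ne.symm hc.2, hb, hc.1⟩

theorem exists_infinite_infinite_compl (A : Type u) [Infinite A] :
    ∃ B : Set A, B.Infinite ∧ Bᶜ.Infinite := by
  let e := Infinite.natEmbedding A
  refine ⟨Set.range fun k => e (2 * k), Set.infinite_range_of_injective fun j k h => ?_,
    (Set.infinite_range_of_injective (f := fun k => e (2 * k + 1)) fun j k h => ?_).mono ?_⟩
  · have := e.injective h; omega
  · have := e.injective h; omega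
  · rintro _ ⟨k, rfl⟩ ⟨j, h⟩
    have := e.injective h; omega

namespace IsLatticeCongruence

variable {L : Type u} [Lattice L] {r : L → L → Prop}

theorem sup (hr : IsLatticeCongruence L r) {a b c d : L} (h₁ : r a b) (h₂ : r c d) :
    r (a ⊔ c) (b ⊔ d) := (hr.2 a b c d h₁ h₂).1

theorem inf (hr : IsLatticeCongruence L r) {a b c d : L} (h₁ : r a b) (h₂ : r c d) :
    r (a ⊓ c) (b ⊓ d) := (hr.2 a b c d h₁ h₂).2

theorem sup_right (hr : IsLatticeCongruence L r) {a b : L} (h : r a b) (c : L) :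
    r (a ⊔ c) (b ⊔ c) := hr.sup h (hr.1.refl c)

theorem inf_right (hr : IsLatticeCongruence L r) {a b : L} (h : r a b) (c : L) :
    r (a ⊓ c) (b ⊓ c) := hr.inf h (hr.1.refl c)

theorem inf_sup (hr : IsLatticeCongruence L r) {a b : L} (h : r a b) : r (a ⊓ b) (a ⊔ b) := by
  have h₁ : r (a ⊓ b) b := by simpa using hr.inf_right h b
  have h₂ : r (a ⊔ b) b := by simpa using hr.sup_right h b
  exact hr.1.trans h₁ (hr.1.symm h₂)

theorem forall_of_bot_top [BoundedOrder L] (hr : IsLatticeCongruence L r) (h : r ⊥ ⊤) (x y : L) :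
    r x y := by
  have hx : ∀ z, r z ⊤ := fun z => by simpa using hr.sup_right h z
  exact hr.1.trans (hx x) (hr.1.symm (hx y))

end IsLatticeCongruence

namespace MA

variable {A : Type u}

@[simp] theorem bot_eq : (bot : MA A) = ⊥ := rfl

@[simp] theorem top_eq : (top : MA A) = ⊤ := rfl

instance : Nontrivial (MA A) := ⟨⊥, ⊤, nofun⟩

theorem mid_injective : Function.Injective (mid : A → MA A) := fun _ _ => mid.inj

@[simp] theorem mid_le_mid {a b : A} : (mid a : MA A) ≤ mid b ↔ a = b := Iff.rfl

@[simp] theorem mid_ne_bot (a : A) : (mid a : MA A) ≠ ⊥ := nofun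

@[simp] theorem mid_ne_top (a : A) : (mid a : MA A) ≠ ⊤ := nofun

theorem le_mid_iff {x : MA A} {a : A} : x ≤ mid a ↔ x = ⊥ ∨ x = mid a := by
  cases x <;> simp [eq_comm]

theorem mid_sup_mid {a b : A} (h : a ≠ b) : (mid a : MA A) ⊔ mid b = ⊤ := by
  have ha : mid a ≤ mid a ⊔ mid b := le_sup_left
  have hb : mid b ≤ mid a ⊔ mid b := le_sup_right
  generalize mid a ⊔ mid b = z at ha hb
  cases z <;> simp_all

theorem mid_inf_mid {a b : A} (h : a ≠ b) : (mid a : MA A) ⊓ mid b = ⊥ := by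
  have ha : mid a ⊓ mid b ≤ mid a := inf_le_left
  have hb : mid a ⊓ mid b ≤ mid b := inf_le_right
  generalize mid a ⊓ mid b = z at ha hb
  cases z <;> simp_all

theorem monotone_of_map_bot_of_map_top {f : MA A → MA A} (hbot : f ⊥ = ⊥) (htop : f ⊤ = ⊤) :
    Monotone f := by
  rintro (_ | a | _) (_ | b | _) h <;> simp_all

section Congruence

variable [Infinite A] {r : MA A → MA A → Prop}

theorem rel_bot_top_of_rel_bot_mid (hr : IsLatticeCongruence (MA A) r) {a : A}
    (h : r ⊥ (mid a)) : r ⊥ ⊤ := by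
  obtain ⟨b, c, hbc, hba, hca⟩ := exists_pair_ne_ne a
  have hb : r (mid b) ⊤ := by simpa [mid_sup_mid hba.symm] using hr.sup_right h (mid b)
  have hc : r ⊥ (mid c) := by simpa [mid_inf_mid hbc] using hr.inf_right hb (mid c)
  simpa [mid_sup_mid hca.symm] using hr.sup h hc

theorem rel_bot_top_of_rel_mid_top (hr : IsLatticeCongruence (MA A) r) {a : A}
    (h : r (mid a) ⊤) : r ⊥ ⊤ := by
  obtain ⟨b, hb⟩ := exists_ne a
  exact rel_bot_top_of_rel_bot_mid hr (a := b) <| by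
    simpa [mid_inf_mid hb.symm] using hr.inf_right h (mid b)

theorem rel_bot_top_of_lt (hr : IsLatticeCongruence (MA A) r) {x y : MA A} (hxy : x < y)
    (h : r x y) : r ⊥ ⊤ := by
  rcases x with _ | a | _ <;> rcases y with _ | b | _
  case bot.mid => exact rel_bot_top_of_rel_bot_mid hr h
  case bot.top => exact h
  case mid.top => exact rel_bot_top_of_rel_mid_top hr h
  all_goals simp [lt_iff_le_and_ne] at hxy

theorem isSimpleLattice : IsSimpleLattice (MA A) := by
  intro r hr
  refine or_iff_not_imp_left.2 fun hne => ?_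
  obtain ⟨x, y, hxy, hne⟩ : ∃ x y, r x y ∧ x ≠ y := by
    push Not at hne
    obtain ⟨x, y, ⟨hxy, hne⟩ | ⟨hxy, rfl⟩⟩ := hne
    · exact ⟨x, y, hxy, hne⟩
    · exact absurd (hr.1.refl x) hxy
  exact hr.forall_of_bot_top (rel_bot_top_of_lt hr (inf_lt_sup.2 hne) (hr.inf_sup hxy))

end Congruence

theorem willeProperty [Infinite A] : WilleProperty (MA A) := by
  intro f hreg hsup
  have hmono : Monotone f := fun x y hxy => by
    rw [← sup_eq_right.2 hxy, hsup]
    exact le_sup_left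
  have htop : ∀ a b, a ≠ b → f ⊤ = f (mid a) ⊔ f (mid b) := fun a b hab => by
    rw [← hsup, mid_sup_mid hab]
  by_cases h : ∃ a, f (mid a) = ⊥
  · right
    obtain ⟨a, ha⟩ := h
    obtain ⟨b, c, hbc, hba, hca⟩ := exists_pair_ne_ne a
    have hle : ∀ d, d ≠ a → f ⊤ ≤ mid d := fun d hd => by
      rw [htop a d hd.symm, ha, bot_sup_eq]
      exact hreg _
    have hftop : f ⊤ = ⊥ := le_bot_iff.1 <| by
      simpa [mid_inf_mid hbc] using le_inf (hle b hba) (hle c hca)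
    funext x
    exact le_bot_iff.1 (hftop ▸ hmono le_top)
  · left
    push Not at h
    have hid : ∀ a, f (mid a) = mid a := fun a => (le_mid_iff.1 (hreg _)).resolve_left (h a)
    funext x
    rcases x with _ | a | _
    · exact le_bot_iff.1 (hreg ⊥)
    · exact hid a
    · obtain ⟨a, b, hab, -⟩ := exists_pair_ne_ne (Classical.arbitrary A)
      rw [top_eq, htop a b hab, hid, hid, mid_sup_mid hab]
      rfl

section Separation

variable [Infinite A]

theorem exists_sup_eq_top_inf_eq_bot {β : MA A} (hβ : β ≠ ⊤) :
    ∃ c d : MA A, c ⊔ d = ⊤ ∧ β ⊓ c = ⊥ ∧ β ⊓ d = ⊥ := by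
  obtain ⟨m, hm⟩ : ∃ m, β ≤ mid m := by
    rcases β with _ | m | _
    · exact ⟨Classical.arbitrary A, bot_le⟩
    · exact ⟨m, le_rfl⟩
    · exact absurd rfl hβ
  obtain ⟨c, d, hcd, hcm, hdm⟩ := exists_pair_ne_ne m
  refine ⟨mid c, mid d, mid_sup_mid hcd, le_bot_iff.1 ?_, le_bot_iff.1 ?_⟩
  · exact (inf_le_inf_right _ hm).trans (mid_inf_mid hcm.symm).le
  · exact (inf_le_inf_right _ hm).trans (mid_inf_mid hdm.symm).le

theorem exists_sup_eq_top_of_not_le {α β : MA A} (h : ¬α ≤ β) :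
    ∃ c, α ⊔ c = ⊤ ∧ β ⊓ α ⊔ c ≠ ⊤ := by
  rcases α with _ | m | _
  · exact absurd bot_le h
  · have hβm : β ⊓ mid m = ⊥ :=
      (le_mid_iff.1 inf_le_right).resolve_right fun he => h (he ▸ inf_le_left)
    obtain ⟨c, hc⟩ := exists_ne m
    exact ⟨mid c, mid_sup_mid hc.symm, by simp [hβm]⟩
  · exact ⟨⊥, sup_bot_eq _, by simpa [top_le_iff] using h⟩

theorem exists_separating {α β : MA A} (h : ¬α ≤ β) :
    ∃ g, IsUnaryPolyFn (MA A) g ∧ g α = ⊤ ∧ g β = ⊥ := by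
  obtain ⟨c, hαc, hβc⟩ := exists_sup_eq_top_of_not_le h
  obtain ⟨d, e, hde, hd, he⟩ := exists_sup_eq_top_inf_eq_bot hβc
  have hpoly : IsUnaryPolyFn (MA A) fun y => y ⊓ α ⊔ c :=
    (IsUnaryPolyFn.id.inf (.const α)).sup (.const c)
  refine ⟨fun y => (y ⊓ α ⊔ c) ⊓ d ⊔ (y ⊓ α ⊔ c) ⊓ e,
    (hpoly.inf (.const d)).sup (hpoly.inf (.const e)), ?_, ?_⟩
  · simp [hαc, hde]
  · simp only [hd, he, sup_idem]

end Separation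

def map {B : Type u} (f : A → B) : MA A → MA B
  | bot => ⊥
  | mid a => mid (f a)
  | top => ⊤

@[simp] theorem map_bot {B : Type u} (f : A → B) : map f ⊥ = ⊥ := rfl

@[simp] theorem map_top {B : Type u} (f : A → B) : map f ⊤ = ⊤ := rfl

@[simp] theorem map_mid {B : Type u} (f : A → B) (a : A) : map f (mid a) = mid (f a) := rfl

def congr {B : Type u} (e : A ≃ B) : MA A ≃o MA B where
  toFun := map e
  invFun := map e.symm
  left_inv x := by cases x <;> simp
  right_inv x := by cases x <;> simp
  map_rel_iff' {x y} := by cases x <;> cases y <;> simp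

@[simp] theorem congr_apply {B : Type u} (e : A ≃ B) (x : MA A) : congr e x = map e x := rfl

open Classical in
noncomputable def restrictTo (B : Set A) : MA A → MA A
  | bot => ⊥
  | mid a => if a ∈ B then mid a else ⊥
  | top => ⊤

theorem monotone_restrictTo (B : Set A) : Monotone (restrictTo B) :=
  monotone_of_map_bot_of_map_top rfl rfl

theorem not_isPolyFn_restrictTo {B : Set A} (hB : B.Infinite) (hBc : Bᶜ.Infinite) :
    ¬IsPolyFn (MA A) 1 fun x => restrictTo B (x 0) := by
  classical
  intro hp
  obtain ⟨C, hC, hcomm⟩ := hp.exists_finite_forall_orderIso_comp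
  have hD : (mid ⁻¹' C).Finite := hC.preimage mid_injective.injOn
  obtain ⟨b, hbB, hbC⟩ := (hB.sdiff hD).nonempty
  obtain ⟨b', hb'B, hb'C⟩ := (hBc.sdiff hD).nonempty
  have hfix : ∀ c ∈ C, congr (Equiv.swap b b') c = c := by
    rintro (_ | a | _) hc
    · rfl
    · have hab : a ≠ b := by rintro rfl; exact hbC hc
      have hab' : a ≠ b' := by rintro rfl; exact hb'C hc
      simp [Equiv.swap_apply_of_ne_of_ne hab hab']
    · rfl
  exact hb'B (by simpa [restrictTo, hbB] using hcomm _ hfix fun _ => mid b)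

end MA

/-- For every infinite set `A`, the bounded lattice `M_A` (the antichain `A` together with a
bottom and a top element) is simple, satisfies Wille's property and has the interpolation
property, but is not order-polynomially complete. -/
theorem MA_simple_wille_ip_not_opc (A : Type u) [Infinite A] :
    IsSimpleLattice (MA A) ∧
    WilleProperty (MA A) ∧
    (∀ (n : ℕ) (f : (Fin n → MA A) → MA A), Monotone f →
      ∀ S : Set (Fin n → MA A), S.Finite →
        ∃ p, IsPolyFn (MA A) n p ∧ ∀ a ∈ S, p a = f a) ∧
    ¬(∀ (n : ℕ) (f : (Fin n → MA A) → MA A), Monotone f → IsPolyFn (MA A) n f) := by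
  refine ⟨MA.isSimpleLattice, MA.willeProperty,
    fun n f hf S hS => IsPolyFn.exists_eqOn_of_separating (fun _ _ => MA.exists_separating) hf hS,
    fun hopc => ?_⟩
  obtain ⟨B, hB, hBc⟩ := exists_infinite_infinite_compl A
  exact MA.not_isPolyFn_restrictTo hB hBc
    (hopc 1 _ fun x y hxy => MA.monotone_restrictTo B (hxy 0))
end
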